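/- arXiv:2011.00315 — 3 statements merged into one kernel-verified Lean document; each statement's English description precedes it below -/
import Mathlib

section
/- For each integer n ≥ 0 and every r > 0, the modified Bessel functions of the first kind satisfy I_{n+1}'(r)/I_{n+1}(r) > I_n'(r)/I_n(r). -/
/-- Modified Bessel function of the first kind of integer order. -/
noncomputable def besselI (n : ℕ) (r : ℝ) : ℝ :=
  ∑' k : ℕ, (r / 2) ^ (n + 2 * k) / ((Nat.factorial k : ℝ) * (Nat.factorial (n + k) : ℝ))

/-!
Clearing the positive denominators, the claim is `r (I_{n+1}' I_n - I_n' I_{n+1}) > 0`. With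
`c_ν(k) = 1 / (k! (ν+k)!)`, both `I_ν` and `r I_ν'` are power series in `r/2` with coefficients
`c_ν(k)` and `(ν+2k) c_ν(k)`, so the left side is a power series whose coefficient of
`(r/2)^(2n+1+2m)` is `∑_{k+l=m} (1 + 2k - 2l) c_{n+1}(k) c_n(l)`. Vandermonde's identity evaluates
the convolutions `∑_{k+l=m} c_μ(k) c_ν(l) = (μ+ν+2m)! / (m! (μ+m)! (ν+m)! (μ+ν+m)!)`, and since
`k c_μ(k) = c_{μ+1}(k-1)` the coefficient is a combination of three of them, equal to
`(2n+1) (2n+2m)! / (m! (n+m)! (n+m+1)! (2n+m+1)!) > 0`.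
-/

open Finset Finset.Nat
open scoped Nat

noncomputable def besselCoeff (n k : ℕ) : ℝ := ((k ! : ℝ) * (n + k)!)⁻¹

lemma besselCoeff_pos (n k : ℕ) : 0 < besselCoeff n k := by
  unfold besselCoeff; positivity

lemma besselCoeff_le_inv_factorial (n k : ℕ) : besselCoeff n k ≤ (k ! : ℝ)⁻¹ := by
  unfold besselCoeff
  gcongr
  exact le_mul_of_one_le_right (by positivity) (mod_cast (n + k).factorial_pos)

lemma besselI_eq_tsum (n : ℕ) (r : ℝ) :
    besselI n r = ∑' k, besselCoeff n k * (r / 2) ^ (n + 2 * k) := by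
  simp only [besselI, besselCoeff, div_eq_inv_mul]

lemma succ_mul_besselCoeff_succ (n k : ℕ) :
    ((k + 1 : ℕ) : ℝ) * besselCoeff n (k + 1) = besselCoeff (n + 1) k := by
  simp only [besselCoeff, Nat.factorial_succ k, show n + (k + 1) = n + 1 + k by ring]
  push_cast
  field_simp

lemma sum_antidiagonal_besselCoeff_mul (μ ν m : ℕ) :
    ∑ p ∈ antidiagonal m, besselCoeff μ p.1 * besselCoeff ν p.2
      = (μ + ν + 2 * m)! / (m ! * (μ + m)! * (ν + m)! * (μ + ν + m)!) := by
  -- Vandermonde for `(ν + m) + (μ + m)` choose `m`, whose terms are `(μ + m)! (ν + m)!` times ours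
  have hterm : ∀ p ∈ antidiagonal m, besselCoeff μ p.1 * besselCoeff ν p.2
      = ((ν + m).choose p.1 * (μ + m).choose p.2 : ℕ) / ((μ + m)! * (ν + m)! : ℝ) := by
    rintro ⟨k, l⟩ hp
    rw [HasAntidiagonal.mem_antidiagonal] at hp
    subst hp
    push_cast
    rw [Nat.cast_choose ℝ (by omega), Nat.cast_choose ℝ (by omega),
      show ν + (k + l) - k = ν + l by omega, show μ + (k + l) - l = μ + k by omega, besselCoeff,
      besselCoeff]
    field_simp
  rw [sum_congr rfl hterm, ← sum_div, ← Nat.cast_sum, ← Nat.add_choose_eq,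
    Nat.cast_choose ℝ (by omega), show ν + m + (μ + m) - m = μ + ν + m by omega,
    show ν + m + (μ + m) = μ + ν + 2 * m by ring]
  field_simp

lemma sum_antidiagonal_fst_mul_besselCoeff_mul (μ ν m : ℕ) :
    ∑ p ∈ antidiagonal (m + 1), (p.1 : ℝ) * (besselCoeff μ p.1 * besselCoeff ν p.2)
      = ∑ p ∈ antidiagonal m, besselCoeff (μ + 1) p.1 * besselCoeff ν p.2 := by
  rw [sum_antidiagonal_succ]
  simp only [Nat.cast_zero, zero_mul, zero_add, ← succ_mul_besselCoeff_succ, mul_assoc]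

lemma sum_antidiagonal_snd_mul_besselCoeff_mul (μ ν m : ℕ) :
    ∑ p ∈ antidiagonal (m + 1), (p.2 : ℝ) * (besselCoeff μ p.1 * besselCoeff ν p.2)
      = ∑ p ∈ antidiagonal m, besselCoeff μ p.1 * besselCoeff (ν + 1) p.2 := by
  rw [sum_antidiagonal_succ']
  simp only [Nat.cast_zero, zero_mul, mul_zero, zero_add, ← succ_mul_besselCoeff_succ,
    mul_left_comm]

noncomputable def besselWronskianCoeff (n m : ℕ) : ℝ :=
  ∑ p ∈ antidiagonal m,
    (1 + 2 * (p.1 : ℝ) - 2 * p.2) * (besselCoeff (n + 1) p.1 * besselCoeff n p.2)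

lemma besselWronskianCoeff_eq (n m : ℕ) :
    besselWronskianCoeff n m
      = (2 * n + 1) * (2 * n + 2 * m)! / (m ! * (n + m)! * (n + m + 1)! * (2 * n + m + 1)!) := by
  rcases m with _ | m
  · rw [besselWronskianCoeff, HasAntidiagonal.antidiagonal_zero, sum_singleton, besselCoeff,
      besselCoeff, Nat.factorial_succ (2 * n)]
    norm_num
    field_simp
  · have hsplit : besselWronskianCoeff n (m + 1)
        = ∑ p ∈ antidiagonal (m + 1), besselCoeff (n + 1) p.1 * besselCoeff n p.2
          + 2 * ∑ p ∈ antidiagonal m, besselCoeff (n + 2) p.1 * besselCoeff n p.2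
          - 2 * ∑ p ∈ antidiagonal m, besselCoeff (n + 1) p.1 * besselCoeff (n + 1) p.2 := by
      rw [← sum_antidiagonal_fst_mul_besselCoeff_mul (n + 1) n m,
        ← sum_antidiagonal_snd_mul_besselCoeff_mul (n + 1) n m, mul_sum, mul_sum, ← sum_add_distrib,
        ← sum_sub_distrib, besselWronskianCoeff]
      exact sum_congr rfl fun p _ => by ring
    rw [hsplit, sum_antidiagonal_besselCoeff_mul, sum_antidiagonal_besselCoeff_mul,
      sum_antidiagonal_besselCoeff_mul]
    -- write every factorial as a polynomial multiple of `m!`, `(n+m)!`, `(2n+m+2)!` or `(2n+2m+2)!`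
    rw [show n + 1 + n + 2 * (m + 1) = 2 * n + 2 * m + 2 + 1 by ring,
      show n + 2 + n + 2 * m = 2 * n + 2 * m + 2 by ring,
      show n + 1 + (n + 1) + 2 * m = 2 * n + 2 * m + 2 by ring,
      show 2 * n + 2 * (m + 1) = 2 * n + 2 * m + 2 by ring,
      show n + 1 + n + (m + 1) = 2 * n + m + 2 by ring,
      show n + 2 + n + m = 2 * n + m + 2 by ring,
      show n + 1 + (n + 1) + m = 2 * n + m + 2 by ring,
      show 2 * n + (m + 1) + 1 = 2 * n + m + 2 by ring,
      show n + 1 + (m + 1) = n + m + 1 + 1 by ring, show n + 2 + m = n + m + 1 + 1 by ring,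
      show n + (m + 1) + 1 = n + m + 1 + 1 by ring, show n + (m + 1) = n + m + 1 by ring,
      show n + 1 + m = n + m + 1 by ring]
    simp only [Nat.factorial_succ]
    push_cast
    field_simp
    ring

lemma nat_mul_pow_le_two_mul_pow (j : ℕ) {a : ℝ} (ha : 0 ≤ a) : j * a ^ j ≤ (2 * a) ^ j := by
  rw [mul_pow]
  gcongr
  exact_mod_cast j.lt_two_pow_self.le

lemma nat_mul_pow_sub_one_le_two_mul_pow (j : ℕ) {a R : ℝ} (ha : 0 ≤ a) (haR : a ≤ R)
    (hR : 1 ≤ R) : j * a ^ (j - 1) ≤ (2 * R) ^ j :=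
  calc (j : ℝ) * a ^ (j - 1) ≤ j * R ^ j := by
        gcongr
        exact (pow_le_pow_left₀ ha haR _).trans (pow_le_pow_right₀ hR (Nat.sub_le _ _))
    _ ≤ (2 * R) ^ j := nat_mul_pow_le_two_mul_pow j (by linarith)

lemma summable_norm_besselCoeff_mul_pow (n : ℕ) (x : ℝ) :
    Summable fun k => ‖besselCoeff n k * x ^ (n + 2 * k)‖ := by
  refine .of_nonneg_of_le (fun _ => norm_nonneg _) (fun k => ?_)
    ((Real.summable_pow_div_factorial (x ^ 2)).mul_left (|x| ^ n))
  rw [norm_mul, Real.norm_of_nonneg (besselCoeff_pos n k).le, norm_pow, Real.norm_eq_abs, pow_add,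
    pow_mul, sq_abs]
  calc besselCoeff n k * (|x| ^ n * (x ^ 2) ^ k) ≤ (k ! : ℝ)⁻¹ * (|x| ^ n * (x ^ 2) ^ k) := by
        gcongr; exact besselCoeff_le_inv_factorial n k
    _ = |x| ^ n * ((x ^ 2) ^ k / k !) := by ring

lemma summable_norm_nat_mul_besselCoeff_mul_pow (n : ℕ) (x : ℝ) :
    Summable fun k => ‖((n + 2 * k : ℕ) : ℝ) * (besselCoeff n k * x ^ (n + 2 * k))‖ := by
  refine .of_nonneg_of_le (fun _ => norm_nonneg _) (fun k => ?_)
    (summable_norm_besselCoeff_mul_pow n (2 * |x|))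
  simp only [norm_mul, norm_pow, Real.norm_eq_abs, Nat.abs_cast, abs_two, abs_abs,
    abs_of_pos (besselCoeff_pos n k)]
  rw [mul_left_comm]
  exact mul_le_mul_of_nonneg_left (nat_mul_pow_le_two_mul_pow _ (abs_nonneg x))
    (besselCoeff_pos n k).le

lemma hasDerivAt_besselI (n : ℕ) (r : ℝ) :
    HasDerivAt (besselI n)
      (∑' k, besselCoeff n k * ((n + 2 * k : ℕ) * (r / 2) ^ (n + 2 * k - 1) * (1 / 2))) r := by
  set R := |r| + 1
  have hR : 1 ≤ R := by simp [R]
  have hderiv (k : ℕ) (y : ℝ) : HasDerivAt (fun z => besselCoeff n k * (z / 2) ^ (n + 2 * k))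
      (besselCoeff n k * ((n + 2 * k : ℕ) * (y / 2) ^ (n + 2 * k - 1) * (1 / 2))) y :=
    (((hasDerivAt_id y).div_const 2).pow _).const_mul _
  have hbound (k : ℕ) (y : ℝ) (hy : y ∈ Metric.ball 0 R) :
      ‖besselCoeff n k * ((n + 2 * k : ℕ) * (y / 2) ^ (n + 2 * k - 1) * (1 / 2))‖
        ≤ besselCoeff n k * (2 * R) ^ (n + 2 * k) := by
    have hy2 : |y / 2| ≤ R := by
      rw [Metric.mem_ball, dist_zero_right, Real.norm_eq_abs] at hy
      rw [abs_div, abs_two]; linarith [abs_nonneg y]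
    rw [norm_mul, Real.norm_of_nonneg (besselCoeff_pos n k).le]
    refine mul_le_mul_of_nonneg_left ?_ (besselCoeff_pos n k).le
    rw [norm_mul, norm_mul, Real.norm_natCast, norm_pow, Real.norm_eq_abs]
    calc _ ≤ ((n + 2 * k : ℕ) : ℝ) * |y / 2| ^ (n + 2 * k - 1) :=
          mul_le_of_le_one_right (by positivity) (by norm_num)
      _ ≤ _ := nat_mul_pow_sub_one_le_two_mul_pow _ (abs_nonneg _) hy2 hR
  have hsum : Summable fun k => besselCoeff n k * (2 * R) ^ (n + 2 * k) :=
    (summable_norm_besselCoeff_mul_pow n (2 * R)).of_norm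
  rw [show besselI n = fun z => ∑' k, besselCoeff n k * (z / 2) ^ (n + 2 * k) from
    funext (besselI_eq_tsum n)]
  exact hasDerivAt_tsum_of_isPreconnected hsum Metric.isOpen_ball
    (convex_ball 0 R).isPreconnected (fun k y _ => hderiv k y) hbound
    (Metric.mem_ball_self (by linarith))
    (summable_norm_besselCoeff_mul_pow n _).of_norm (by simp [R])

lemma mul_deriv_besselI (n : ℕ) (r : ℝ) :
    r * deriv (besselI n) r
      = ∑' k, ((n + 2 * k : ℕ) : ℝ) * (besselCoeff n k * (r / 2) ^ (n + 2 * k)) := by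
  rw [(hasDerivAt_besselI n r).deriv, ← tsum_mul_left]
  congr 1 with k
  rcases Nat.eq_zero_or_pos (n + 2 * k) with h | h
  · simp [h]
  · rw [← mul_pow_sub_one h.ne' (r / 2)]
    ring

lemma besselI_pos (n : ℕ) {r : ℝ} (hr : 0 < r) : 0 < besselI n r := by
  rw [besselI_eq_tsum]
  have hpos (k : ℕ) : 0 < besselCoeff n k * (r / 2) ^ (n + 2 * k) :=
    mul_pos (besselCoeff_pos n k) (pow_pos (half_pos hr) _)
  exact (summable_norm_besselCoeff_mul_pow n _).of_norm.tsum_pos (fun k => (hpos k).le) 0 (hpos 0)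

lemma hasSum_besselWronskianCoeff_mul_pow (n : ℕ) (x : ℝ) :
    HasSum (fun m => besselWronskianCoeff n m * x ^ (2 * n + 1 + 2 * m))
      ((∑' k, ((n + 1 + 2 * k : ℕ) : ℝ) * (besselCoeff (n + 1) k * x ^ (n + 1 + 2 * k)))
          * (∑' k, besselCoeff n k * x ^ (n + 2 * k))
        - (∑' k, besselCoeff (n + 1) k * x ^ (n + 1 + 2 * k))
          * ∑' k, ((n + 2 * k : ℕ) : ℝ) * (besselCoeff n k * x ^ (n + 2 * k))) := by
  have h₁ := summable_norm_nat_mul_besselCoeff_mul_pow (n + 1) x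
  have h₂ := summable_norm_besselCoeff_mul_pow n x
  have h₃ := summable_norm_besselCoeff_mul_pow (n + 1) x
  have h₄ := summable_norm_nat_mul_besselCoeff_mul_pow n x
  have hs₁ := (summable_norm_sum_mul_antidiagonal_of_summable_norm h₁ h₂).of_norm
  have hs₂ := (summable_norm_sum_mul_antidiagonal_of_summable_norm h₃ h₄).of_norm
  rw [tsum_mul_tsum_eq_tsum_sum_antidiagonal_of_summable_norm h₁ h₂,
    tsum_mul_tsum_eq_tsum_sum_antidiagonal_of_summable_norm h₃ h₄, ← hs₁.tsum_sub hs₂]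
  refine (hs₁.sub hs₂).hasSum.congr_fun fun m => ?_
  rw [besselWronskianCoeff, sum_mul, ← sum_sub_distrib]
  refine sum_congr rfl fun p hp => ?_
  rw [HasAntidiagonal.mem_antidiagonal] at hp
  rw [← hp, show 2 * n + 1 + 2 * (p.1 + p.2) = (n + 1 + 2 * p.1) + (n + 2 * p.2) by ring,
    pow_add]
  push_cast
  ring

theorem besselI_logDeriv_strict_mono (n : ℕ) (r : ℝ) (hr : 0 < r) :
    deriv (besselI (n + 1)) r / besselI (n + 1) r
      > deriv (besselI n) r / besselI n r := by
  have hW : 0 < r * deriv (besselI (n + 1)) r * besselI n r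
      - besselI (n + 1) r * (r * deriv (besselI n) r) := by
    have h := hasSum_besselWronskianCoeff_mul_pow n (r / 2)
    rw [← mul_deriv_besselI, ← mul_deriv_besselI, ← besselI_eq_tsum, ← besselI_eq_tsum] at h
    have hpos (m : ℕ) : 0 < besselWronskianCoeff n m * (r / 2) ^ (2 * n + 1 + 2 * m) := by
      rw [besselWronskianCoeff_eq]; positivity
    exact h.tsum_eq ▸ h.summable.tsum_pos (fun m => (hpos m).le) 0 (hpos 0)
  rw [gt_iff_lt, div_lt_div_iff₀ (besselI_pos n hr) (besselI_pos (n + 1) hr)]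
  refine lt_of_mul_lt_mul_left ?_ hr.le
  linear_combination hW
end

section
/- For all r > 0, I₀(r) I₂(r) < I₁(r)², where I_n denotes the modified Bessel function of the first kind of order n. -/
open Finset Nat

theorem Nat.sum_antidiagonal_choose_mul_choose_add (m n a : ℕ) :
    ∑ p ∈ antidiagonal m, m.choose p.1 * n.choose (a + p.1) = (m + n).choose (m + a) := by
  rw [add_choose_eq, Nat.sum_antidiagonal_eq_sum_range_succ (fun i j => m.choose i * n.choose j),
    Nat.sum_antidiagonal_eq_sum_range_succ (fun i _ => m.choose i * n.choose (a + i)),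
    show (m + a).succ = (m + 1) + a by omega, sum_range_add, ← sum_range_reflect]
  have hvanish : ∀ x ∈ range a, m.choose (m + 1 + x) * n.choose (m + a - (m + 1 + x)) = 0 :=
    fun x _ => by rw [choose_eq_zero_of_lt (by omega), zero_mul]
  rw [sum_eq_zero hvanish, add_zero]
  refine sum_congr rfl fun k hk => ?_
  have hkm : k ≤ m := by simpa [Nat.lt_succ_iff] using hk
  rw [show m + 1 - 1 - k = m - k by omega, choose_symm hkm, show a + (m - k) = m + a - k by omega]

theorem Nat.choose_lt_choose_succ {n k : ℕ} (h : 2 * k + 1 < n) :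
    n.choose k < n.choose (k + 1) := by
  have hrec := choose_succ_right_eq n k
  have hpos : 0 < n.choose k := choose_pos (by omega)
  have hgap : k + 1 < n - k := by omega
  by_contra! hle
  nlinarith [Nat.mul_lt_mul_of_pos_left hgap hpos, Nat.mul_le_mul_right (k + 1) hle]

noncomputable def besselITerm (n : ℕ) (x : ℝ) (k : ℕ) : ℝ :=
  x ^ (n + 2 * k) / (k ! * (n + k)!)

theorem besselI_eq_tsum_besselITerm (n : ℕ) (r : ℝ) :
    besselI n r = ∑' k, besselITerm n (r / 2) k :=
  rfl

theorem norm_besselITerm_le (n : ℕ) (x : ℝ) (k : ℕ) :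
    ‖besselITerm n x k‖ ≤ |x| ^ n * ((x ^ 2) ^ k / k !) := by
  have hfact : (1 : ℝ) ≤ (n + k)! := by exact_mod_cast (n + k).factorial_pos
  calc ‖besselITerm n x k‖ = |x| ^ (n + 2 * k) / (k ! * (n + k)!) := by
        rw [besselITerm, norm_div, norm_pow, Real.norm_eq_abs, Real.norm_of_nonneg (by positivity)]
    _ ≤ |x| ^ (n + 2 * k) / k ! :=
        div_le_div_of_nonneg_left (by positivity) (by positivity)
          (le_mul_of_one_le_right (by positivity) hfact)
    _ = |x| ^ n * ((x ^ 2) ^ k / k !) := by rw [pow_add, pow_mul, sq_abs, mul_div_assoc]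

theorem summable_norm_besselITerm (n : ℕ) (x : ℝ) : Summable fun k => ‖besselITerm n x k‖ :=
  ((Real.summable_pow_div_factorial (x ^ 2)).mul_left _).of_nonneg_of_le (fun _ => norm_nonneg _)
    (norm_besselITerm_le n x)

theorem besselITerm_mul_besselITerm (a b : ℕ) (x : ℝ) {i j m : ℕ} (hm : i + j = m) :
    besselITerm a x i * besselITerm b x j =
      (m.choose i * (m + a + b).choose (a + i) : ℕ) * x ^ (2 * m + a + b) /
        (m ! * (m + a + b)!) := by
  subst hm
  have h₁ : ((i + j).choose i * i ! * j ! : ℝ) = (i + j)! := by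
    exact_mod_cast choose_symm_add ▸ add_choose_mul_factorial_mul_factorial i j
  have h₂ : ((i + j + a + b).choose (a + i) * (a + i)! * (b + j)! : ℝ) = (i + j + a + b)! := by
    rw [show i + j + a + b = (a + i) + (b + j) by ring]
    exact_mod_cast choose_symm_add ▸ add_choose_mul_factorial_mul_factorial (a + i) (b + j)
  have hc₁ : ((i + j).choose i : ℝ) ≠ 0 := by exact_mod_cast (choose_pos (by omega)).ne'
  have hc₂ : ((i + j + a + b).choose (a + i) : ℝ) ≠ 0 := by
    exact_mod_cast (choose_pos (by omega)).ne'
  rw [besselITerm, besselITerm, ← h₁, ← h₂]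
  push_cast
  field_simp
  ring

theorem sum_antidiagonal_besselITerm_mul (a b : ℕ) (x : ℝ) (m : ℕ) :
    ∑ p ∈ antidiagonal m, besselITerm a x p.1 * besselITerm b x p.2 =
      (2 * m + a + b).choose (m + a) * x ^ (2 * m + a + b) / (m ! * (m + a + b)!) := by
  rw [sum_congr rfl fun p hp => besselITerm_mul_besselITerm a b x (mem_antidiagonal.1 hp),
    ← sum_div, ← sum_mul, ← Nat.cast_sum, sum_antidiagonal_choose_mul_choose_add,
    show m + (m + a + b) = 2 * m + a + b by ring]

theorem hasSum_besselI_mul_besselI (a b : ℕ) (r : ℝ) :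
    HasSum
      (fun m => (2 * m + a + b).choose (m + a) * (r / 2) ^ (2 * m + a + b) / (m ! * (m + a + b)!))
      (besselI a r * besselI b r) := by
  have hprod := tsum_mul_tsum_eq_tsum_sum_antidiagonal_of_summable_norm
    (summable_norm_besselITerm a (r / 2)) (summable_norm_besselITerm b (r / 2))
  have hsum := (summable_norm_sum_mul_antidiagonal_of_summable_norm
    (summable_norm_besselITerm a (r / 2)) (summable_norm_besselITerm b (r / 2))).of_norm
  simp only [sum_antidiagonal_besselITerm_mul] at hprod hsum
  rw [besselI_eq_tsum_besselITerm, besselI_eq_tsum_besselITerm, hprod]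
  exact hsum.hasSum

theorem besselI_turan (r : ℝ) (hr : 0 < r) :
    besselI 0 r * besselI 2 r < (besselI 1 r) ^ 2 := by
  have hterm (m : ℕ) :
      ((2 * m + 0 + 2).choose (m + 0) : ℝ) * (r / 2) ^ (2 * m + 0 + 2) / (m ! * (m + 0 + 2)!) <
        (2 * m + 1 + 1).choose (m + 1) * (r / 2) ^ (2 * m + 1 + 1) / (m ! * (m + 1 + 1)!) := by
    have hchoose := choose_lt_choose_succ (n := 2 * m + 2) (k := m) (by omega)
    simp only [add_zero, add_assoc, one_add_one_eq_two]
    gcongr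
  rw [sq]
  exact hasSum_lt (fun m => (hterm m).le) (hterm 0)
    (hasSum_besselI_mul_besselI 0 2 r) (hasSum_besselI_mul_besselI 1 1 r)
end

section
/- Fix R_S > 0 and for n ≥ 2 define μ_n = −1/R_S + (I₀(R_S)/(R_S² I₁(R_S))) · [(n²−1) I_n'(R_S)/I_n(R_S)] / [I_n'(R_S)/I_n(R_S) − I₁'(R_S)/I₁(R_S)]. Assuming the inequalities I_{n+1}'(r)/I_{n+1}(r) > I_n'(r)/I_n(r) for n ≥ 0 and (1/(n²−1))(I_n'(r)/I_n(r) − I₁'(r)/I₁(r)) > (1/((n+1)²−1))(I_{n+1}'(r)/I_{n+1}(r) − I₁'(r)/I₁(r)) for n ≥ 2, prove μ_{n+1} > μ_n for all n ≥ 2. -/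
/-- The bifurcation values μ_n for the modified Hele-Shaw problem. -/
noncomputable def muBif (R_S : ℝ) (n : ℕ) : ℝ :=
  -1 / R_S + (besselI 0 R_S / (R_S ^ 2 * besselI 1 R_S)) *
    (((n : ℝ) ^ 2 - 1) * deriv (besselI n) R_S / besselI n R_S) /
    (deriv (besselI n) R_S / besselI n R_S - deriv (besselI 1) R_S / besselI 1 R_S)

lemma mul_div_sub_lt_mul_div_sub {a b c x y : ℝ} (hc : 0 ≤ c) (ha : 0 < a) (hab : a < b)
    (hx : c < x) (hy : c < y) (h : (y - c) / b < (x - c) / a) :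
    a * x / (x - c) < b * y / (y - c) := by
  have hb : 0 < b := ha.trans hab
  have split : ∀ {p z : ℝ}, 0 < p → c < z → p * z / (z - c) = p + c / ((z - c) / p) := by
    intro p z hp hz
    field_simp [(sub_pos.2 hz).ne']
    ring
  calc a * x / (x - c) = a + c / ((x - c) / a) := split ha hx
    _ < b + c / ((x - c) / a) := by gcongr
    _ ≤ b + c / ((y - c) / b) := by gcongr
    _ = b * y / (y - c) := (split hb hy).symm

namespace besselI

lemma summable_series (n : ℕ) (r : ℝ) :
    Summable fun k : ℕ => (r / 2) ^ (n + 2 * k) / ((k.factorial : ℝ) * ((n + k).factorial : ℝ)) := by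
  refine .of_norm_bounded ((Real.summable_pow_div_factorial (|r / 2| ^ 2)).mul_left (|r / 2| ^ n))
    fun k => ?_
  have hk : (0 : ℝ) < k.factorial := mod_cast k.factorial_pos
  have hnk : (1 : ℝ) ≤ (n + k).factorial := mod_cast (n + k).factorial_pos
  rw [norm_div, norm_pow, Real.norm_eq_abs, pow_add, pow_mul, mul_div_assoc,
    Real.norm_of_nonneg (by positivity)]
  gcongr
  exact le_mul_of_one_le_right hk.le hnk

lemma pos (n : ℕ) {r : ℝ} (hr : 0 < r) : 0 < besselI n r :=
  (summable_series n r).tsum_pos (fun _ => by positivity) 0 (by positivity)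

lemma monotone_one : Monotone (besselI 1) := fun a b hab =>
  (summable_series 1 a).tsum_le_tsum (fun k => by
    gcongr ?_ / _
    exact (Odd.strictMono_pow ⟨k, by ring⟩).monotone (div_le_div_of_nonneg_right hab zero_le_two))
    (summable_series 1 b)

end besselI

lemma muBif_eq (R_S : ℝ) (n : ℕ) :
    muBif R_S n = -1 / R_S + besselI 0 R_S / (R_S ^ 2 * besselI 1 R_S) *
      (((n : ℝ) ^ 2 - 1) * (deriv (besselI n) R_S / besselI n R_S) /
        (deriv (besselI n) R_S / besselI n R_S - deriv (besselI 1) R_S / besselI 1 R_S)) := by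
  rw [muBif, mul_div_assoc, mul_div_assoc, mul_div_assoc]

theorem muBif_strictMono (R_S : ℝ) (hR : 0 < R_S)
    (hA1 : ∀ n : ℕ, ∀ r : ℝ, 0 < r →
      deriv (besselI (n + 1)) r / besselI (n + 1) r > deriv (besselI n) r / besselI n r)
    (hA7 : ∀ n : ℕ, 2 ≤ n → ∀ r : ℝ, 0 < r →
      (1 / ((n : ℝ) ^ 2 - 1)) * (deriv (besselI n) r / besselI n r
          - deriv (besselI 1) r / besselI 1 r)
        > (1 / (((n : ℝ) + 1) ^ 2 - 1)) * (deriv (besselI (n + 1)) r / besselI (n + 1) r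
          - deriv (besselI 1) r / besselI 1 r)) :
    ∀ n : ℕ, 2 ≤ n → muBif R_S (n + 1) > muBif R_S n := by
  intro n hn
  have hlogDeriv_mono : StrictMono fun k => deriv (besselI k) R_S / besselI k R_S :=
    strictMono_nat_of_lt_succ fun k => hA1 k R_S hR
  have hlogDeriv_one_nonneg : 0 ≤ deriv (besselI 1) R_S / besselI 1 R_S :=
    div_nonneg besselI.monotone_one.deriv_nonneg (besselI.pos 1 hR).le
  have hcoeff : 0 < besselI 0 R_S / (R_S ^ 2 * besselI 1 R_S) := by
    have := besselI.pos 0 hR; have := besselI.pos 1 hR; positivity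
  have hn' : (2 : ℝ) ≤ n := mod_cast hn
  have hratio := mul_div_sub_lt_mul_div_sub (a := (n : ℝ) ^ 2 - 1) (b := ((n : ℝ) + 1) ^ 2 - 1)
    hlogDeriv_one_nonneg (by nlinarith) (by nlinarith)
    (hlogDeriv_mono (by omega : 1 < n)) (hlogDeriv_mono (by omega : 1 < n + 1))
    (by simpa only [one_div_mul_eq_div] using hA7 n hn R_S hR)
  rw [muBif_eq, muBif_eq, Nat.cast_succ]
  exact (add_lt_add_iff_left _).2 (mul_lt_mul_of_pos_left hratio hcoeff)
end
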